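/- If the eigenvalues of a symmetric positive definite matrix G all lie in the open interval (0, 3), then the Newton–Schulz iteration G_{m+1} = C_m G_m C_m with C_m = (3/2)I - (1/2)G_m converges to the identity matrix. -/

import Mathlib

/-!
The step `a ↦ (3/2 - a/2) a (3/2 - a/2)` commutes with every algebra homomorphism, so an
orthogonal diagonalisation of `G` reduces the iteration to the scalar map
`f x = x (3 - x)² / 4` acting on each eigenvalue. One step of `f` sends `(0, 3)` into `(0, 1]`,
and from then on `1 - f x = (1 - x)² (4 - x) / 4` squares the error at every step.
-/

open Filter Set Topology

noncomputable def newtonSchulzStep {A : Type*} [Ring A] [Algebra ℝ A] (a : A) : A :=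
  ((3/2 : ℝ) • 1 - (1/2 : ℝ) • a) * a * ((3/2 : ℝ) • 1 - (1/2 : ℝ) • a)

section Algebra

variable {A B F : Type*} [Ring A] [Ring B] [Algebra ℝ A] [Algebra ℝ B]
  [FunLike F A B] [AlgHomClass F ℝ A B]

theorem map_newtonSchulzStep (φ : F) (a : A) :
    φ (newtonSchulzStep a) = newtonSchulzStep (φ a) := by
  simp only [newtonSchulzStep, map_mul, map_sub, map_smul, map_one]

theorem map_iterate_newtonSchulzStep (φ : F) (m : ℕ) (a : A) :
    φ (newtonSchulzStep^[m] a) = newtonSchulzStep^[m] (φ a) :=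
  Function.Semiconj.iterate_right (map_newtonSchulzStep φ) m a

end Algebra

theorem Pi.iterate_newtonSchulzStep_apply {ι : Type*} (m : ℕ) (d : ι → ℝ) (i : ι) :
    (newtonSchulzStep^[m] d) i = newtonSchulzStep^[m] (d i) :=
  map_iterate_newtonSchulzStep (Pi.evalAlgHom ℝ (fun _ => ℝ) i) m d

namespace Real

theorem newtonSchulzStep_eq (x : ℝ) :
    newtonSchulzStep x = (3/2 - x/2) * x * (3/2 - x/2) := by
  simp only [newtonSchulzStep, smul_eq_mul, mul_one]
  ring

theorem one_sub_newtonSchulzStep (x : ℝ) :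
    1 - newtonSchulzStep x = (1 - x)^2 * (4 - x) / 4 := by
  rw [newtonSchulzStep_eq]; ring

theorem newtonSchulzStep_mapsTo : MapsTo newtonSchulzStep (Ioo (0 : ℝ) 3) (Ioc 0 1) := by
  intro x ⟨hx0, hx3⟩
  have h : 0 ≤ (1 - x)^2 * (4 - x) := mul_nonneg (sq_nonneg _) (by linarith)
  constructor
  · rw [newtonSchulzStep_eq]
    have : 0 < 3/2 - x/2 := by linarith
    positivity
  · linarith [one_sub_newtonSchulzStep x]

theorem abs_one_sub_newtonSchulzStep_le {x : ℝ} (hx : x ∈ Icc 0 4) :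
    |1 - newtonSchulzStep x| ≤ |1 - x|^2 := by
  obtain ⟨hx0, hx4⟩ := hx
  rw [one_sub_newtonSchulzStep, sq_abs, abs_of_nonneg (by positivity)]
  nlinarith [sq_nonneg (1 - x)]

theorem abs_one_sub_iterate_newtonSchulzStep_le {x : ℝ} (hx : x ∈ Ioo 0 3) (m : ℕ) :
    |1 - newtonSchulzStep^[m] x| ≤ |1 - x|^(2^m) := by
  have hstay : MapsTo newtonSchulzStep (Ioo (0 : ℝ) 3) (Ioo 0 3) :=
    newtonSchulzStep_mapsTo.mono_right fun y ⟨hy0, hy1⟩ => ⟨hy0, by linarith⟩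
  induction m with
  | zero => simp
  | succ m ih =>
    obtain ⟨hy0, hy3⟩ := hstay.iterate m hx
    calc |1 - newtonSchulzStep^[m + 1] x|
        = |1 - newtonSchulzStep (newtonSchulzStep^[m] x)| := by
          rw [Function.iterate_succ_apply']
      _ ≤ |1 - newtonSchulzStep^[m] x|^2 :=
          abs_one_sub_newtonSchulzStep_le ⟨hy0.le, by linarith⟩
      _ ≤ (|1 - x|^(2^m))^2 := pow_le_pow_left₀ (abs_nonneg _) ih 2
      _ = |1 - x|^(2^(m + 1)) := by rw [← pow_mul, pow_succ]

theorem tendsto_iterate_newtonSchulzStep {x : ℝ} (hx : x ∈ Ioo 0 3) :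
    Tendsto (newtonSchulzStep^[·] x) atTop (𝓝 1) := by
  obtain ⟨hy0, hy1⟩ := newtonSchulzStep_mapsTo hx
  set y := newtonSchulzStep x
  have hy : y ∈ Ioo 0 3 := ⟨hy0, by linarith⟩
  have hq : |1 - y| < 1 := by rw [abs_of_nonneg (by linarith)]; linarith
  have hbound : Tendsto (fun m : ℕ => |1 - y|^(2^m)) atTop (𝓝 0) :=
    (tendsto_pow_atTop_nhds_zero_of_lt_one (abs_nonneg _) hq).comp
      (tendsto_pow_atTop_atTop_of_one_lt one_lt_two)
  have herr : Tendsto (fun m => 1 - newtonSchulzStep^[m] y) atTop (𝓝 0) :=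
    squeeze_zero_norm (abs_one_sub_iterate_newtonSchulzStep_le hy) hbound
  have hshift : Tendsto (newtonSchulzStep^[·] y) atTop (𝓝 1) := by
    simpa using tendsto_const_nhds (x := (1 : ℝ)).sub herr
  exact (tendsto_add_atTop_iff_nat 1).mp hshift

end Real

open Matrix Unitary in
theorem Matrix.IsHermitian.tendsto_iterate_newtonSchulzStep {n : Type*} [Fintype n]
    [DecidableEq n] {A : Matrix n n ℝ} (hA : A.IsHermitian)
    (hspec : ∀ μ ∈ spectrum ℝ A, μ ∈ Ioo 0 3) :
    Tendsto (newtonSchulzStep^[·] A) atTop (𝓝 1) := by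
  set φ := conjStarAlgAut ℝ _ hA.eigenvectorUnitary
  have hA' : A = φ (diagonalAlgHom ℝ hA.eigenvalues) := by
    convert hA.spectral_theorem using 3
    simp
  have hiter : ∀ m, newtonSchulzStep^[m] A =
      φ (diagonal fun i => newtonSchulzStep^[m] (hA.eigenvalues i)) := fun m => by
    rw [congrArg newtonSchulzStep^[m] hA', ← map_iterate_newtonSchulzStep,
      ← map_iterate_newtonSchulzStep]
    exact congrArg (φ ∘ diagonal) (funext (Pi.iterate_newtonSchulzStep_apply m _))
  have hdiag : Tendsto (fun m => diagonal fun i => newtonSchulzStep^[m] (hA.eigenvalues i))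
      atTop (𝓝 (diagonal 1)) :=
    (continuous_id.matrix_diagonal.tendsto _).comp <| tendsto_pi_nhds.mpr fun i =>
      Real.tendsto_iterate_newtonSchulzStep (hspec _ (hA.eigenvalues_mem_spectrum_real i))
  have hφ : Continuous φ :=
    (continuous_const.matrix_mul continuous_id).matrix_mul continuous_const
  simpa [hiter, Function.comp_def] using (hφ.tendsto _).comp hdiag

theorem newton_schulz_converges_general {K : ℕ} (G : Matrix (Fin K) (Fin K) ℝ)
    (hsym : G.IsSymm)
    (heig : ∀ μ ∈ spectrum ℝ G, μ ∈ Set.Ioo (0 : ℝ) 3)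
    (Gs : ℕ → Matrix (Fin K) (Fin K) ℝ)
    (h0 : Gs 0 = G)
    (hrec : ∀ m, Gs (m + 1) =
      ((3/2 : ℝ) • (1 : Matrix (Fin K) (Fin K) ℝ) - (1/2 : ℝ) • Gs m) * Gs m *
      ((3/2 : ℝ) • (1 : Matrix (Fin K) (Fin K) ℝ) - (1/2 : ℝ) • Gs m)) :
    Tendsto Gs atTop (nhds (1 : Matrix (Fin K) (Fin K) ℝ)) := by
  have hGs : Gs = (newtonSchulzStep^[·] G) := by
    funext m
    induction m with
    | zero => exact h0
    | succ m ih => rw [hrec, ih, Function.iterate_succ_apply']; rfl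
  rw [hGs]
  exact (Matrix.isHermitian_iff_isSymm.mpr hsym).tendsto_iterate_newtonSchulzStep heig

/-- Newton–Schulz iteration on a symmetric positive definite matrix with
eigenvalues in `(0, 3)` converges to the identity. -/
theorem newton_schulz_converges {K : ℕ} (G : Matrix (Fin K) (Fin K) ℝ)
    (hsym : G.IsSymm) (hpd : G.PosDef)
    (heig : ∀ μ ∈ spectrum ℝ G, μ ∈ Set.Ioo (0 : ℝ) 3)
    (Gs : ℕ → Matrix (Fin K) (Fin K) ℝ)
    (h0 : Gs 0 = G)
    (hrec : ∀ m, Gs (m + 1) =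
      ((3/2 : ℝ) • (1 : Matrix (Fin K) (Fin K) ℝ) - (1/2 : ℝ) • Gs m) * Gs m *
      ((3/2 : ℝ) • (1 : Matrix (Fin K) (Fin K) ℝ) - (1/2 : ℝ) • Gs m)) :
    Tendsto Gs atTop (nhds (1 : Matrix (Fin K) (Fin K) ℝ)) :=
  newton_schulz_converges_general G hsym heig Gs h0 hrec
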